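/- For every RVT code word W whose Puiseux characteristic is [λ₀; λ₁, …, λ_g]: W begins with RR if and only if λ₁ > 2λ₀ (with the convention that a word of all R's, having PC [1;], counts as satisfying this when g = 0 vacuously); W begins with RVT^τR or equals RVT^τ if and only if λ₀ = (τ+2)(λ₁−λ₀) and λ₁ = (τ+3)(λ₁−λ₀); and W begins with RVT^τV if and only if (τ+1)(λ₁−λ₀) < λ₀ < (τ+2)(λ₁−λ₀). -/

import Mathlib

/-!
A valid word other than `Rⁿ` has the form `Rᵏ V u` with `k ≥ 1`, and then `PC = [m; t, …]` with
`k m < t < (k + 1) m`. This invariant is proved by induction along the front-end recursion: the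
lift is a shorter valid word, and rules (A), (B), (C) carry the invariant for the lift over to the
word itself. Applied to the lift, it shows that `λ₀ / (λ₁ - λ₀)` lies in `[0, 1)` under rule (A),
equals `τ + 2` under rule (B) and lies in `(τ + 1, τ + 2)` under rule (C); since these regions are
disjoint, `λ₀` and `λ₁` determine which rule applies and with which `τ`.
-/

/-- The three symbols of an RVT code word. -/
inductive RVT : Type
  | R | V | T
deriving DecidableEq, Repr

/-- Replace a leading run of `T`'s by `R`'s. -/
def deT : List RVT → List RVT
  | RVT.T :: xs => RVT.R :: deT xs
  | xs => xs

/-- If the word begins with `V`, replace that `V` and the immediately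
following `T`'s by `R`'s. -/
def reg : List RVT → List RVT
  | RVT.V :: xs => RVT.R :: deT xs
  | xs => xs

/-- The lifted word `L(W)`: remove the first symbol (an `R`), then replace a
leading maximal critical block `V Tᵗ` by `R^(t+1)`. -/
def lift (w : List RVT) : List RVT := reg w.tail

/-- Length of the leading run of `T`'s. -/
def countT : List RVT → ℕ
  | RVT.T :: xs => countT xs + 1
  | _ => 0

/-- Fueled version of the front-end recursion for the Puiseux characteristic
(Theorem PCfront): base case `[1]` on all-`R` words; given
`PC(L(W)) = [l0; l1, ..., lg]`,
(A) if `W` begins `RR` then `PC(W) = [l0; l1+l0, ..., lg+l0]`;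
(B) if `W` begins `R V T^t R` or `W = R V T^t` then
`PC(W) = [(t+2)l0; (t+3)l0, l1+l0, ..., lg+l0]`;
(C) if `W` begins `R V T^t V` then `PC(W) = [l1; l1+l0, ..., lg+l0]`. -/
def PCf : ℕ → List RVT → List ℕ
  | 0, _ => [1]
  | _ + 1, [] => [1]
  | fuel + 1, w@(_ :: rest) =>
    if w.all (· = RVT.R) then [1]
    else
      let p := PCf fuel (lift w)
      let l0 := p.headD 1
      let tl := p.tail
      match rest with
      | RVT.V :: xs =>
        match xs.drop (countT xs) with
        | RVT.V :: _ => tl.headD 1 :: tl.map (· + l0)                                -- case (C)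
        | _ => ((countT xs + 2) * l0) :: ((countT xs + 3) * l0) :: tl.map (· + l0)   -- case (B)
      | _ => l0 :: tl.map (· + l0)                                                   -- case (A)

/-- The Puiseux characteristic `PC(W)` computed by the front-end recursion. -/
def PC (w : List RVT) : List ℕ := PCf w.length w

/-- A valid RVT code word: begins with `R`, and `T` occurs only immediately
after a `V` or a `T`. -/
def ValidRVT (w : List RVT) : Prop :=
  w.head? = some RVT.R ∧
  ∀ i, w[i + 1]? = some RVT.T → (w[i]? = some RVT.V ∨ w[i]? = some RVT.T)

/-- The function `E` on strings, with `E_T[a;b] = [a;a+b]`, `E_V[a;b] = [b;a+b]`,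
`E_R = E_T`, and base value `E(empty) = [1;2]`; the leftmost symbol acts last. -/
def Efun : List RVT → ℕ × ℕ
  | [] => (1, 2)
  | RVT.V :: q => ((Efun q).2, (Efun q).1 + (Efun q).2)
  | _ :: q => ((Efun q).1, (Efun q).1 + (Efun q).2)

/-- The Euclidean-type recursion: `Euc(1,2)` is the empty word; for coprime
`a < b`, if `b < 2a` then `Euc(a,b) = V · Euc(b-a,a)`, and if `b > 2a` then
`Euc(a,b) = T · Euc(a,b-a)`. -/
def Euc (a b : ℕ) : List RVT :=
  if a = 1 ∧ b = 2 then []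
  else if _h1 : 0 < a ∧ a < b ∧ b < 2 * a then RVT.V :: Euc (b - a) a
  else if _h2 : 0 < a ∧ a < b ∧ 2 * a < b then RVT.T :: Euc a (b - a)
  else []
termination_by a + b
decreasing_by all_goals omega

open List

theorem List.exists_eq_replicate_append_head?_ne {α : Type*} (a : α) :
    ∀ l : List α, ∃ n l', l = replicate n a ++ l' ∧ l'.head? ≠ some a
  | [] => ⟨0, [], rfl, by simp⟩
  | b :: l => by
    by_cases hb : b = a
    · obtain ⟨n, l', rfl, hl'⟩ := exists_eq_replicate_append_head?_ne a l
      exact ⟨n + 1, l', by simp [hb, replicate_succ], hl'⟩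
    · exact ⟨0, b :: l, rfl, by simpa using hb⟩

theorem List.replicate_append_cons_inj {α : Type*} {a b b' : α} {m n : ℕ} {l l' : List α}
    (hb : b ≠ a) (hb' : b' ≠ a) :
    replicate m a ++ b :: l = replicate n a ++ b' :: l' ↔ m = n ∧ b = b' ∧ l = l' := by
  induction m generalizing n with
  | zero => cases n <;> simp [replicate_succ, hb]
  | succ m ih => cases n <;> simp [replicate_succ, ih, hb'.symm]

open RVT

theorem validRVT_iff {w : List RVT} :
    ValidRVT w ↔ w.head? = some R ∧ w.IsChain (fun a b => b = T → a ≠ R) := by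
  rw [ValidRVT, isChain_iff_getElem]
  refine and_congr_right fun _ => ⟨fun h i hi hT => ?_, fun h i hT => ?_⟩
  · have := h i (by simp [hi, hT])
    rw [getElem?_eq_getElem (by omega)] at this
    cases h : w[i] <;> simp_all
  · have hi : i + 1 < w.length := by
      by_contra hc; simp [getElem?_eq_none (by omega : w.length ≤ i + 1)] at hT
    rw [getElem?_eq_getElem hi] at hT
    rw [getElem?_eq_getElem (by omega)]
    have := h i hi (by simpa using hT)
    cases h' : w[i] <;> simp_all

theorem deT_replicate_T_append {s : ℕ} {z : List RVT} (hz : z.head? ≠ some T) :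
    deT (replicate s T ++ z) = replicate s R ++ z := by
  induction s with
  | zero => rcases z with _ | ⟨_ | _ | _, _⟩ <;> simp_all [deT]
  | succ s ih => simp [replicate_succ, deT, ih]

theorem countT_replicate_T_append {s : ℕ} {z : List RVT} (hz : z.head? ≠ some T) :
    countT (replicate s T ++ z) = s := by
  induction s with
  | zero => rcases z with _ | ⟨_ | _ | _, _⟩ <;> simp_all [countT]
  | succ s ih => simp [replicate_succ, countT, ih]

theorem lift_R_V_replicate_T_append {s : ℕ} {z : List RVT} (hz : z.head? ≠ some T) :
    lift (R :: V :: (replicate s T ++ z)) = replicate (s + 1) R ++ z := by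
  simp [lift, reg, deT_replicate_T_append hz, replicate_succ]

theorem length_deT (w : List RVT) : (deT w).length = w.length := by
  induction w with
  | nil => rfl
  | cons x w ih => cases x <;> simp [deT, ih]

theorem length_lift (w : List RVT) : (lift w).length = w.length - 1 := by
  rcases w with _ | ⟨_, _ | ⟨_ | _ | _, _⟩⟩ <;> simp [lift, reg, length_deT]

theorem PC_of_forall_eq_R {w : List RVT} (h : ∀ x ∈ w, x = R) : PC w = [1] := by
  rcases w with _ | ⟨x, rest⟩
  · rfl
  · rw [PC, length_cons, PCf, if_pos (by simpa using h)]

theorem PCf_length_lift {x : RVT} {rest : List RVT} :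
    PCf rest.length (lift (x :: rest)) = PC (lift (x :: rest)) := by
  rw [PC, length_lift]; rfl

theorem PC_ruleA {u : List RVT} {tl : List ℕ} {m : ℕ} (hV : V ∈ u) (h : PC (R :: u) = m :: tl) :
    PC (R :: R :: u) = m :: tl.map (· + m) := by
  rw [PC, length_cons, PCf, if_neg (by simpa using ⟨V, hV, by decide⟩), PCf_length_lift]
  simp only [lift, tail_cons, reg]
  rw [h]
  rfl

theorem PC_ruleB {s : ℕ} {z : List RVT} {tl : List ℕ} {m : ℕ}
    (hz : z = [] ∨ ∃ u, z = R :: u) (h : PC (replicate (s + 1) R ++ z) = m :: tl) :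
    PC (R :: V :: (replicate s T ++ z)) = (s + 2) * m :: (s + 3) * m :: tl.map (· + m) := by
  have hzT : z.head? ≠ some T := by rcases hz with rfl | ⟨u, rfl⟩ <;> simp
  rw [PC, length_cons, PCf, if_neg (by simp), PCf_length_lift,
    lift_R_V_replicate_T_append hzT, h]
  dsimp only
  rw [countT_replicate_T_append hzT, drop_left' (by simp)]
  rcases hz with rfl | ⟨u, rfl⟩ <;> rfl

theorem PC_ruleC {s : ℕ} {u : List RVT} {tl : List ℕ} {m t : ℕ}
    (h : PC (replicate (s + 1) R ++ V :: u) = m :: t :: tl) :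
    PC (R :: V :: (replicate s T ++ V :: u)) = t :: (t + m) :: tl.map (· + m) := by
  have hzT : (V :: u).head? ≠ some T := by simp
  rw [PC, length_cons, PCf, if_neg (by simp), PCf_length_lift,
    lift_R_V_replicate_T_append hzT, h]
  dsimp only
  rw [countT_replicate_T_append hzT, drop_left' (by simp)]
  rfl

theorem eq_nil_or_R_or_V_of_head?_ne_T {z : List RVT} (hz : z.head? ≠ some T) :
    (z = [] ∨ ∃ v, z = R :: v) ∨ ∃ v, z = V :: v := by
  rcases z with _ | ⟨_ | _ | _, v⟩ <;> simp_all

theorem ValidRVT.of_R_R {u : List RVT} (h : ValidRVT (R :: R :: u)) : ValidRVT (R :: u) := by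
  rw [validRVT_iff] at h ⊢
  exact ⟨rfl, h.2.tail⟩

theorem ValidRVT.lift_R_V {s : ℕ} {z : List RVT} (h : ValidRVT (R :: V :: (replicate s T ++ z)))
    (hz : z.head? ≠ some T) : ValidRVT (replicate (s + 1) R ++ z) := by
  rw [validRVT_iff] at h ⊢
  refine ⟨by simp [replicate_succ], ?_⟩
  refine (isChain_replicate_of_rel _ (by simp)).append (h.2.suffix ?_) ?_
  · exact suffix_cons_iff.mpr (.inr (suffix_cons_iff.mpr (.inr (suffix_append _ _))))
  · intro x _ y hy hyT _
    exact hz (hyT ▸ hy)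

theorem ValidRVT.eq_replicate_R_append_V {w : List RVT} (h : ValidRVT w) (hR : ¬ ∀ x ∈ w, x = R) :
    ∃ k u, w = replicate k R ++ V :: u := by
  obtain ⟨k, z, rfl, hz⟩ := exists_eq_replicate_append_head?_ne R w
  rcases z with _ | ⟨_ | _ | _, u⟩
  · simp_all
  · simp at hz
  · exact ⟨k, u, rfl⟩
  · rw [validRVT_iff, isChain_append] at h
    rcases k with _ | k
    · simp at h
    · exact (h.2.2.2 R (by simp [getLast?_replicate]) T rfl rfl rfl).elim

/-- Stated with the bounds as a hypothesis so that it can be used inside the induction that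
proves them. -/
theorem exists_PC_eq_cons_pos {w : List RVT} (hw : ValidRVT w)
    (hbounds : ∀ k u, w = replicate k R ++ V :: u →
      ∃ m t tl, PC w = m :: t :: tl ∧ k * m < t ∧ t < (k + 1) * m) :
    ∃ m tl, PC w = m :: tl ∧ 0 < m := by
  by_cases hR : ∀ x ∈ w, x = R
  · exact ⟨1, [], PC_of_forall_eq_R hR, one_pos⟩
  · obtain ⟨k, u, hwk⟩ := hw.eq_replicate_R_append_V hR
    obtain ⟨m, t, tl, hPC, -, hk'⟩ := hbounds k u hwk
    exact ⟨m, t :: tl, hPC, Nat.pos_of_ne_zero fun hm => by simp [hm] at hk'⟩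

theorem PC_bounds_of_eq_replicate_R_append_V {w : List RVT} (hw : ValidRVT w) {k : ℕ}
    {u : List RVT} (hwk : w = replicate k R ++ V :: u) :
    ∃ m t tl, PC w = m :: t :: tl ∧ k * m < t ∧ t < (k + 1) * m := by
  induction hn : w.length using Nat.strong_induction_on generalizing w k u with
  | _ n ih =>
  subst hwk
  rcases k with _ | _ | k
  · simp [ValidRVT] at hw
  · obtain ⟨s, z, rfl, hzT⟩ := exists_eq_replicate_append_head?_ne T u
    have hlift := hw.lift_R_V hzT
    have hlt : (replicate (s + 1) R ++ z).length < n := by simp at hn ⊢; omega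
    obtain hz | ⟨v, rfl⟩ := eq_nil_or_R_or_V_of_head?_ne_T hzT
    · obtain ⟨m, tl, hPC, hm⟩ := exists_PC_eq_cons_pos hlift fun _ _ h => ih _ hlt hlift h rfl
      refine ⟨_, _, _, PC_ruleB hz hPC, ?_, ?_⟩ <;> nlinarith
    · obtain ⟨m, t, tl, hPC, hs, hs'⟩ := ih _ hlt hlift rfl rfl
      refine ⟨t, t + m, tl.map (· + m), PC_ruleC hPC, ?_, ?_⟩ <;> nlinarith
  · obtain ⟨m, t, tl, hPC, hk, hk'⟩ := ih _ (by simp at hn ⊢; omega) hw.of_R_R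
      (show R :: (replicate k R ++ V :: u) = replicate (k + 1) R ++ V :: u from rfl) rfl
    refine ⟨m, t + m, tl.map (· + m), PC_ruleA (by simp) hPC, ?_, ?_⟩ <;> nlinarith

theorem PC_head_pos {w : List RVT} (hw : ValidRVT w) {m : ℕ} {tl : List ℕ}
    (h : PC w = m :: tl) : 0 < m := by
  obtain ⟨m', tl', h', hm'⟩ :=
    exists_PC_eq_cons_pos hw fun _ _ hwk => PC_bounds_of_eq_replicate_R_append_V hw hwk
  rw [h, cons.injEq] at h'
  exact h'.1 ▸ hm'

inductive FrontCase
  | A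
  | B (τ : ℕ)
  | C (τ : ℕ)

namespace FrontCase

def Begins : FrontCase → List RVT → Prop
  | A, W => ∃ u, W = R :: R :: u
  | B τ, W => (∃ u, W = R :: V :: (replicate τ T ++ R :: u)) ∨ W = R :: V :: replicate τ T
  | C τ, W => ∃ u, W = R :: V :: (replicate τ T ++ V :: u)

def Fits : FrontCase → ℕ → ℕ → Prop
  | A, l0, l1 => l1 > 2 * l0
  | B τ, l0, l1 => l0 = (τ + 2) * (l1 - l0) ∧ l1 = (τ + 3) * (l1 - l0)
  | C τ, l0, l1 => (τ + 1) * (l1 - l0) < l0 ∧ l0 < (τ + 2) * (l1 - l0)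

theorem begins_unique {c c' : FrontCase} {W : List RVT} (h : c.Begins W) (h' : c'.Begins W) :
    c = c' := by
  cases c with
  | A => obtain ⟨u, rfl⟩ := h; cases c' <;> simp_all [Begins]
  | B τ =>
    rcases h with ⟨u, rfl⟩ | rfl <;> cases c' <;>
      simp_all [Begins, replicate_append_cons_inj, append_eq_replicate_iff, replicate_eq_append_iff,
        replicate_succ]
  | C τ =>
    obtain ⟨u, rfl⟩ := h
    cases c' <;>
      simp_all [Begins, replicate_append_cons_inj, append_eq_replicate_iff, replicate_succ]

theorem fits_unique {c c' : FrontCase} {l0 l1 : ℕ} (h0 : 0 < l0) (h : c.Fits l0 l1)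
    (h' : c'.Fits l0 l1) : c = c' := by
  obtain ⟨d, hd⟩ : ∃ d, l1 - l0 = d := ⟨_, rfl⟩
  have not_between {a b : ℕ} (h1 : (a + 1) * d < (b + 2) * d) (h2 : (b + 2) * d < (a + 2) * d) :
      False := by
    have := Nat.lt_of_mul_lt_mul_right h1
    have := Nat.lt_of_mul_lt_mul_right h2
    omega
  cases c <;> cases c' <;> simp only [Fits, hd, B.injEq, C.injEq, reduceCtorEq] at h h' ⊢
  all_goals first
    | rfl
    | nlinarith
    | (have : l0 < d := by omega); nlinarith
    | exact not_between (h.1 ▸ h'.1) (h.1 ▸ h'.2)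
    | exact not_between (h'.1 ▸ h.1) (h'.1 ▸ h.2)

end FrontCase

theorem exists_frontCase_begins_fits {W : List RVT} (hW : ValidRVT W) {l0 l1 : ℕ} {rest : List ℕ}
    (hPC : PC W = l0 :: l1 :: rest) : ∃ c : FrontCase, c.Begins W ∧ c.Fits l0 l1 := by
  have hR : ¬ ∀ x ∈ W, x = R := fun h => by simp [PC_of_forall_eq_R h] at hPC
  obtain ⟨k, u, rfl⟩ := hW.eq_replicate_R_append_V hR
  rcases k with _ | _ | k
  · simp [ValidRVT] at hW
  · obtain ⟨s, z, rfl, hzT⟩ := exists_eq_replicate_append_head?_ne T u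
    have hlift := hW.lift_R_V hzT
    simp only [zero_add, replicate_one, singleton_append] at hPC
    obtain hz | ⟨v, rfl⟩ := eq_nil_or_R_or_V_of_head?_ne_T hzT
    · obtain ⟨m, tl, hPC', hm⟩ := exists_PC_eq_cons_pos hlift fun _ _ h =>
        PC_bounds_of_eq_replicate_R_append_V hlift h
      rw [PC_ruleB hz hPC', cons.injEq, cons.injEq] at hPC
      obtain ⟨rfl, rfl, -⟩ := hPC
      refine ⟨.B s, ?_, ?_⟩
      · rcases hz with rfl | ⟨v, rfl⟩
        exacts [.inr (by simp), .inl ⟨v, rfl⟩]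
      · have hd : (s + 3) * m - (s + 2) * m = m := by rw [← Nat.sub_mul]; simp
        exact ⟨by rw [hd], by rw [hd]⟩
    · obtain ⟨m, t, tl, hPC', hs, hs'⟩ := PC_bounds_of_eq_replicate_R_append_V hlift rfl
      rw [PC_ruleC hPC', cons.injEq, cons.injEq] at hPC
      obtain ⟨rfl, rfl, -⟩ := hPC
      refine ⟨.C s, ⟨v, rfl⟩, ?_⟩
      simpa only [FrontCase.Fits, Nat.add_sub_cancel_left] using ⟨hs, hs'⟩
  · obtain ⟨m, t, tl, hPC', hk, -⟩ := PC_bounds_of_eq_replicate_R_append_V hW rfl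
    rw [hPC', cons.injEq, cons.injEq] at hPC
    obtain ⟨rfl, rfl, -⟩ := hPC
    exact ⟨.A, ⟨_, rfl⟩, show t > 2 * m by nlinarith⟩

/-- Characterization of the three structural cases of an RVT code word `W`
with Puiseux characteristic `[l0; l1, ...]` (so `g ≥ 1`):
`W` begins `RR` iff `l1 > 2 l0`; `W` begins `R V T^τ R` or equals `R V T^τ`
iff `l0 = (τ+2)(l1−l0)` and `l1 = (τ+3)(l1−l0)`; `W` begins `R V T^τ V` iff
`(τ+1)(l1−l0) < l0 < (τ+2)(l1−l0)`. -/
theorem statement4 (W : List RVT) (hW : ValidRVT W) (l0 l1 : ℕ) (rest : List ℕ)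
    (hPC : PC W = l0 :: l1 :: rest) :
    ((∃ u, W = RVT.R :: RVT.R :: u) ↔ l1 > 2 * l0) ∧
    (∀ τ : ℕ,
      ((∃ u, W = RVT.R :: RVT.V :: (List.replicate τ RVT.T ++ RVT.R :: u)) ∨
          W = RVT.R :: RVT.V :: List.replicate τ RVT.T)
        ↔ (l0 = (τ + 2) * (l1 - l0) ∧ l1 = (τ + 3) * (l1 - l0))) ∧
    (∀ τ : ℕ,
      (∃ u, W = RVT.R :: RVT.V :: (List.replicate τ RVT.T ++ RVT.V :: u))
        ↔ ((τ + 1) * (l1 - l0) < l0 ∧ l0 < (τ + 2) * (l1 - l0))) := by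
  obtain ⟨c, hbegins, hfits⟩ := exists_frontCase_begins_fits hW hPC
  have hl0 := PC_head_pos hW hPC
  have key (c' : FrontCase) : c'.Begins W ↔ c'.Fits l0 l1 :=
    ⟨fun h => FrontCase.begins_unique hbegins h ▸ hfits,
      fun h => FrontCase.fits_unique hl0 hfits h ▸ hbegins⟩
  exact ⟨key .A, fun τ => key (.B τ), fun τ => key (.C τ)⟩
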